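/- arXiv:alg-geom/9609007 — 3 statements merged into one kernel-verified Lean document; each statement's English description precedes it below -/
import Mathlib

section
/- In coordinates x₁₁, x₁₂, x₁₃, x₂₂, x₂₃, x₃₃ on a 6-dimensional affine space over a field, the common zero set of the six monomials x₁₁x₃₃, x₁₁x₂₂, x₁₁x₂₃, x₁₂x₃₃, x₁₃x₂₂, x₂₂x₃₃ equals the union of the four linear subspaces defined by the vanishing of {x₁₁, x₂₂, x₃₃}, {x₁₁, x₂₂, x₁₂}, {x₁₁, x₃₃, x₁₃}, and {x₂₂, x₃₃, x₂₃} respectively. -/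
theorem special_fibre_four_planes {k : Type*} [Field k]
    (x11 x12 x13 x22 x23 x33 : k) :
    (x11 * x33 = 0 ∧ x11 * x22 = 0 ∧ x11 * x23 = 0 ∧
     x12 * x33 = 0 ∧ x13 * x22 = 0 ∧ x22 * x33 = 0) ↔
    ((x11 = 0 ∧ x22 = 0 ∧ x33 = 0) ∨
     (x11 = 0 ∧ x22 = 0 ∧ x12 = 0) ∨
     (x11 = 0 ∧ x33 = 0 ∧ x13 = 0) ∨
     (x22 = 0 ∧ x33 = 0 ∧ x23 = 0)) := by
  simp only [mul_eq_zero]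
  tauto
end

section
/- Let k be a field and p₁, p₂, p₃, p₄ ∈ P²(k) four points no three of which are collinear. The space of quadratic forms q in three variables (a 6-dimensional vector space) vanishing at all four points has dimension exactly 2. -/
/-!
Restricting the four evaluations to the six-dimensional space of quadratic forms gives a linear
map to `k⁴`, and it suffices to show that this map is surjective, i.e. that for each point there
is a conic through the other three that misses it. If `a, b, c` are the other three points, the
pair of lines `ab ∪ ac` is such a conic: it misses the fourth point because no three of the points
are collinear. The kernel of a surjection from a six- to a four-dimensional space has dimension two.
-/

open MvPolynomial Matrix

namespace MvPolynomial

instance {σ R : Type*} [Finite σ] [CommSemiring R] (n : ℕ) :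
    Module.Finite R (homogeneousSubmodule σ R n) :=
  Module.Finite.iff_fg.2 (homogeneousSubmodule_fg σ R n)

theorem finrank_homogeneousSubmodule {σ R : Type*} [Fintype σ] [CommRing R]
    [StrongRankCondition R] (n : ℕ) :
    Module.finrank R (homogeneousSubmodule σ R n) = (Fintype.card σ + n - 1).choose n := by
  classical
  have hdeg : {d : σ →₀ ℕ | d.degree = n} =
      ((Finset.univ : Finset σ).finsuppAntidiag n : Set (σ →₀ ℕ)) := by
    ext d
    simp [Finsupp.degree_eq_sum]
  rw [homogeneousSubmodule_eq_finsupp_supported, hdeg,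
    (AddMonoidAlgebra.supportedEquivFinsupp _).finrank_eq, Module.finrank_finsupp_self]
  simp [Finset.card_finsuppAntidiag_nat_eq_choose]

variable {σ R : Type*} [Fintype σ] [CommSemiring R]

noncomputable def linearForm (w : σ → R) : MvPolynomial σ R := ∑ i, C (w i) * X i

theorem isHomogeneous_linearForm (w : σ → R) : (linearForm w).IsHomogeneous 1 :=
  IsHomogeneous.sum _ _ _ fun i _ => by
    simpa using (isHomogeneous_C σ (w i)).mul (isHomogeneous_X R i)

@[simp]
theorem aeval_linearForm (w u : σ → R) : aeval u (linearForm w) = w ⬝ᵥ u := by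
  simp [linearForm, dotProduct]

end MvPolynomial

theorem LinearMap.range_eq_top_of_forall_exists_apply_ne_zero {K M ι : Type*} [Field K]
    [AddCommGroup M] [Module K M] [Fintype ι] (f : M →ₗ[K] ι → K)
    (h : ∀ i, ∃ m, f m i ≠ 0 ∧ ∀ j ≠ i, f m j = 0) : LinearMap.range f = ⊤ := by
  classical
  refine eq_top_iff.2 fun x _ => ?_
  have hsingle (i : ι) : Pi.single i (x i) ∈ LinearMap.range f := by
    obtain ⟨m, hmi, hmj⟩ := h i
    refine ⟨(x i / f m i) • m, funext fun j => ?_⟩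
    rcases eq_or_ne j i with rfl | hji
    · simp [hmi]
    · simp [hmj j hji, hji]
  simpa [Finset.univ_sum_single] using
    Submodule.sum_mem _ fun i (_ : i ∈ Finset.univ) => hsingle i

theorem Fin.exists_complement_of_four (i : Fin 4) : ∃ a b c : Fin 4,
    i ≠ a ∧ i ≠ b ∧ i ≠ c ∧ a ≠ b ∧ a ≠ c ∧ ∀ j ≠ i, j = a ∨ j = b ∨ j = c := by
  revert i
  decide

section

variable {k : Type*} [Field k]

theorem dotProduct_crossProduct_ne_zero {u v w : Fin 3 → k}
    (h : LinearIndependent k ![u, v, w]) : u ⬝ᵥ v ⨯₃ w ≠ 0 := by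
  rw [triple_product_eq_det]
  exact ((isUnit_iff_isUnit_det _).1 (linearIndependent_rows_iff_isUnit.1 h)).ne_zero

theorem exists_quadric_vanishing_at_three_ne_zero {p x y z : Fin 3 → k}
    (hy : LinearIndependent k ![p, x, y]) (hz : LinearIndependent k ![p, x, z]) :
    ∃ q ∈ homogeneousSubmodule (Fin 3) k 2,
      aeval x q = 0 ∧ aeval y q = 0 ∧ aeval z q = 0 ∧ aeval p q ≠ 0 := by
  set q := linearForm (x ⨯₃ y) * linearForm (x ⨯₃ z)
  have hq (u : Fin 3 → k) : aeval u q = (u ⬝ᵥ x ⨯₃ y) * (u ⬝ᵥ x ⨯₃ z) := by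
    simp only [q, map_mul, aeval_linearForm, dotProduct_comm _ u]
  refine ⟨q, (isHomogeneous_linearForm _).mul (isHomogeneous_linearForm _), ?_, ?_, ?_, ?_⟩
  · simp only [hq, dot_self_cross, zero_mul]
  · simp only [hq, dot_cross_self, zero_mul]
  · simp only [hq, dot_cross_self, mul_zero]
  · rw [hq]
    exact mul_ne_zero (dotProduct_crossProduct_ne_zero hy) (dotProduct_crossProduct_ne_zero hz)

end

open MvPolynomial in
theorem pencil_of_conics_through_four_points {k : Type*} [Field k]
    (v : Fin 4 → (Fin 3 → k))
    (hgen : ∀ i j l : Fin 4, i ≠ j → i ≠ l → j ≠ l →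
      LinearIndependent k ![v i, v j, v l]) :
    Module.finrank k
      ↥(homogeneousSubmodule (Fin 3) k 2 ⊓
        ⨅ i : Fin 4, LinearMap.ker (aeval (R := k) (v i)).toLinearMap) = 2 := by
  classical
  set H := homogeneousSubmodule (Fin 3) k 2
  set ev : H →ₗ[k] Fin 4 → k := (LinearMap.pi fun i => (aeval (v i)).toLinearMap) ∘ₗ H.subtype
  have hker : H ⊓ ⨅ i, LinearMap.ker (aeval (R := k) (v i)).toLinearMap =
      (LinearMap.ker ev).map H.subtype := by
    rw [LinearMap.ker_comp, LinearMap.ker_pi, Submodule.map_comap_subtype]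
  have hsurj : LinearMap.range ev = ⊤ := by
    refine ev.range_eq_top_of_forall_exists_apply_ne_zero fun i => ?_
    obtain ⟨a, b, c, hia, hib, hic, hab, hac, hother⟩ := Fin.exists_complement_of_four i
    obtain ⟨q, hqH, hqa, hqb, hqc, hqi⟩ := exists_quadric_vanishing_at_three_ne_zero
      (hgen i a b hia hib hab) (hgen i a c hia hic hac)
    refine ⟨⟨q, hqH⟩, hqi, fun j hj => ?_⟩
    rcases hother j hj with rfl | rfl | rfl <;> assumption
  have hrank := ev.finrank_range_add_finrank_ker
  rw [hsurj, finrank_top, Module.finrank_fin_fun, finrank_homogeneousSubmodule] at hrank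
  rw [hker, (Submodule.equivMapOfInjective _ H.injective_subtype _).symm.finrank_eq]
  simp only [Fintype.card_fin, Nat.choose_two_right] at hrank
  omega
end

section
/- Let V be a 6-dimensional vector space over a field, λ a 2-dimensional subspace, M₁ a 4-dimensional subspace with λ ⊆ M₁, M₂ a 4-dimensional subspace with λ ⊆ M₂, Λ = M₁ + M₂ of dimension 5, and N = M₁ ∩ M₂ of dimension 3. If H is a 3-dimensional subspace with H ∩ λ ≠ 0 and dim(H ∩ M₁) ≥ 2 and dim(H ∩ M₂) ≥ 2, then either H ⊆ Λ or dim(H ∩ N) ≥ 2. -/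
theorem schubert_decomposition_two {k V : Type*} [Field k] [AddCommGroup V]
    [Module k V] (hV : Module.finrank k V = 6)
    (lam M₁ M₂ Λ N : Submodule k V)
    (hlam : Module.finrank k lam = 2)
    (hM₁ : Module.finrank k M₁ = 4) (hM₂ : Module.finrank k M₂ = 4)
    (hlM₁ : lam ≤ M₁) (hlM₂ : lam ≤ M₂)
    (hΛ : Λ = M₁ ⊔ M₂) (hΛdim : Module.finrank k Λ = 5)
    (hN : N = M₁ ⊓ M₂) (hNdim : Module.finrank k N = 3)
    (H : Submodule k V) (hH : Module.finrank k H = 3)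
    (h0 : H ⊓ lam ≠ ⊥)
    (h1 : 2 ≤ Module.finrank k ↥(H ⊓ M₁)) (h2 : 2 ≤ Module.finrank k ↥(H ⊓ M₂)) :
    H ≤ Λ ∨ 2 ≤ Module.finrank k ↥(H ⊓ N) := by
  haveI : FiniteDimensional k V := FiniteDimensional.of_finrank_pos (by omega)
  by_cases hcase : 2 ≤ Module.finrank k ↥(H ⊓ N)
  · exact Or.inr hcase
  · left
    have hinf : (H ⊓ M₁) ⊓ (H ⊓ M₂) = H ⊓ N := by
      rw [hN]; ext x; simp; tauto
    have hsum := Submodule.finrank_sup_add_finrank_inf_eq (H ⊓ M₁) (H ⊓ M₂)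
    rw [hinf] at hsum
    have hle : (H ⊓ M₁) ⊔ (H ⊓ M₂) ≤ H := sup_le inf_le_left inf_le_left
    have hmono := Submodule.finrank_mono hle
    have heq : (H ⊓ M₁) ⊔ (H ⊓ M₂) = H := by
      apply Submodule.eq_of_le_of_finrank_le hle
      omega
    rw [← heq, hΛ]
    exact sup_le (le_trans inf_le_right le_sup_left) (le_trans inf_le_right le_sup_right)
end
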